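/- (Explicit b_Λ and its ε-statistics) Let Λ correspond to non-negative integers (a₀, a₁, …, a_n) with Σ a_j = ℓ, and define b_Λ ∈ B^{i,ℓ} by (b_Λ)_{p,q} = a_{q - i + p} for 1 ≤ p ≤ i, i ≤ q ≤ n (so the (p,q)-entry is a_{p + q - i}, indices taken in {1,…,n} — concretely row p reads a_p, a_{p+1}, …, a_{p + n - i}). Then b_Λ satisfies all the defining lattice-path inequalities of B^{i,ℓ}, and ε_l(b_Λ) = a_l for every l = 0, 1, …, n. -/

import Mathlib

open Finset

/-- Matrices of the polytope model: entry `a p q` for row `p`, column `q`. -/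
abbrev Mat := ℕ → ℕ → ℕ

/-- A monotone lattice path `β(1) = (1,i), …, β(n) = (i,n)`: each step increases
the row or the column index by 1. -/
def IsPath (n i : ℕ) (β : ℕ → ℕ × ℕ) : Prop :=
  β 1 = (1, i) ∧ β n = (i, n) ∧
    ∀ s, 1 ≤ s → s < n →
      β (s + 1) = ((β s).1 + 1, (β s).2) ∨ β (s + 1) = ((β s).1, (β s).2 + 1)

/-- Membership in the Kirillov–Reshetikhin polytope `B^{i,m}` of type `A_n^{(1)}`:
non-negative integer matrices indexed by `1 ≤ p ≤ i`, `i ≤ q ≤ n` (zero outside),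
all of whose monotone lattice-path sums are at most `m`. -/
def MemKR (n i m : ℕ) (a : Mat) : Prop :=
  (∀ p q, ¬(1 ≤ p ∧ p ≤ i ∧ i ≤ q ∧ q ≤ n) → a p q = 0) ∧
  ∀ β : ℕ → ℕ × ℕ, IsPath n i β → ∑ s ∈ Icc 1 n, a (β s).1 (β s).2 ≤ m

/-- The set of maximizers of `F` on `S`. -/
def maximizers (S : Finset ℕ) (F : ℕ → ℕ) : Finset ℕ :=
  S.filter fun q => ∀ q' ∈ S, F q' ≤ F q

/-- Smallest maximizer. -/
def argmaxLow (S : Finset ℕ) (F : ℕ → ℕ) : ℕ := (maximizers S F).min.untopD 0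

/-- Largest maximizer. -/
def argmaxHigh (S : Finset ℕ) (F : ℕ → ℕ) : ℕ := (maximizers S F).max.unbotD 0

/-- For `l > i`: `G(q) = Σ_{j=1}^q a_{j,l-1} + Σ_{j=q}^i a_{j,l}`. -/
def Gplus (i : ℕ) (a : Mat) (l q : ℕ) : ℕ :=
  ∑ j ∈ Icc 1 q, a j (l - 1) + ∑ j ∈ Icc q i, a j l

/-- For `l < i`: `F(q) = Σ_{j=i}^q a_{l,j} + Σ_{j=q}^n a_{l+1,j}`. -/
def Fminus (n i : ℕ) (a : Mat) (l q : ℕ) : ℕ :=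
  ∑ j ∈ Icc i q, a l j + ∑ j ∈ Icc q n, a (l + 1) j

def pPlus (i : ℕ) (a : Mat) (l : ℕ) : ℕ := argmaxLow (Icc 1 i) (Gplus i a l)
def qPlus (i : ℕ) (a : Mat) (l : ℕ) : ℕ := argmaxHigh (Icc 1 i) (Gplus i a l)
def pMinus (n i : ℕ) (a : Mat) (l : ℕ) : ℕ := argmaxHigh (Icc i n) (Fminus n i a l)
def qMinus (n i : ℕ) (a : Mat) (l : ℕ) : ℕ := argmaxLow (Icc i n) (Fminus n i a l)

/-- The statistic `φ_l` of the polytope model (`l = 0` is the affine one). -/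
def phi (n i m : ℕ) (a : Mat) (l : ℕ) : ℤ :=
  if l = 0 then (a 1 n : ℤ)
  else if l = i then
    (m : ℤ) - ∑ j ∈ Icc 1 (i - 1), (a j i : ℤ) - ∑ j ∈ Icc i n, (a i j : ℤ)
  else if i < l then
    ∑ j ∈ Icc 1 (pPlus i a l), (a j (l - 1) : ℤ)
      - ∑ j ∈ Icc 1 (pPlus i a l - 1), (a j l : ℤ)
  else
    ∑ j ∈ Icc (pMinus n i a l) n, (a (l + 1) j : ℤ)
      - ∑ j ∈ Icc (pMinus n i a l + 1) n, (a l j : ℤ)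

/-- The statistic `ε_l` of the polytope model (`l = 0` is the affine one). -/
def eps (n i m : ℕ) (a : Mat) (l : ℕ) : ℤ :=
  if l = 0 then
    (m : ℤ) - ∑ j ∈ Icc i n, (a 1 j : ℤ) - ∑ j ∈ Icc 2 n, (a j n : ℤ)
  else if l = i then (a i i : ℤ)
  else if i < l then
    ∑ j ∈ Icc (qPlus i a l) i, (a j l : ℤ)
      - ∑ j ∈ Icc (qPlus i a l + 1) i, (a j (l - 1) : ℤ)
  else
    ∑ j ∈ Icc i (qMinus n i a l), (a l j : ℤ)
      - ∑ j ∈ Icc i (qMinus n i a l - 1), (a (l + 1) j : ℤ)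

/-- Update one entry of a matrix. -/
def upd (a : Mat) (p q v : ℕ) : Mat :=
  fun p' q' => if p' = p ∧ q' = q then v else a p' q'

/-- The Kashiwara raising operator `ẽ_l` on `B^{i,m}` (`l = 0` affine). -/
def eOp (n i m : ℕ) (a : Mat) (l : ℕ) : Option Mat :=
  if eps n i m a l ≤ 0 then none
  else some (
    if l = 0 then upd a 1 n (a 1 n + 1)
    else if l = i then upd a i i (a i i - 1)
    else if i < l then
      upd (upd a (qPlus i a l) (l - 1) (a (qPlus i a l) (l - 1) + 1))
        (qPlus i a l) l (a (qPlus i a l) l - 1)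
    else
      upd (upd a l (qMinus n i a l) (a l (qMinus n i a l) - 1))
        (l + 1) (qMinus n i a l) (a (l + 1) (qMinus n i a l) + 1))

/-- The Kashiwara lowering operator `f̃_l` on `B^{i,m}` (`l = 0` affine). -/
def fOp (n i m : ℕ) (a : Mat) (l : ℕ) : Option Mat :=
  if phi n i m a l ≤ 0 then none
  else some (
    if l = 0 then upd a 1 n (a 1 n - 1)
    else if l = i then upd a i i (a i i + 1)
    else if i < l then
      upd (upd a (pPlus i a l) (l - 1) (a (pPlus i a l) (l - 1) - 1))
        (pPlus i a l) l (a (pPlus i a l) l + 1)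
    else
      upd (upd a l (pMinus n i a l) (a l (pMinus n i a l) + 1))
        (l + 1) (pMinus n i a l) (a (l + 1) (pMinus n i a l) - 1))

/-- `ẽ_l` on the tensor product `B^{r₁,s₁} ⊗ B^{r₂,s₂}`. -/
def eTen (n r₁ s₁ r₂ s₂ l : ℕ) (x : Mat × Mat) : Option (Mat × Mat) :=
  if phi n r₂ s₂ x.2 l < eps n r₁ s₁ x.1 l then
    (eOp n r₁ s₁ x.1 l).map fun a' => (a', x.2)
  else (eOp n r₂ s₂ x.2 l).map fun b' => (x.1, b')

/-- `f̃_l` on the tensor product `B^{r₁,s₁} ⊗ B^{r₂,s₂}`. -/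
def fTen (n r₁ s₁ r₂ s₂ l : ℕ) (x : Mat × Mat) : Option (Mat × Mat) :=
  if phi n r₂ s₂ x.2 l ≤ eps n r₁ s₁ x.1 l then
    (fOp n r₁ s₁ x.1 l).map fun a' => (a', x.2)
  else (fOp n r₂ s₂ x.2 l).map fun b' => (x.1, b')

/-- Classical highest weight element of the tensor product. -/
def IsHW (n r₁ s₁ r₂ s₂ : ℕ) (x : Mat × Mat) : Prop :=
  ∀ l, 1 ≤ l → l ≤ n → eTen n r₁ s₁ r₂ s₂ l x = none

/-- Cartan matrix of type `A_n`: `⟨α_r, α_j^∨⟩`. -/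
def cartan (r j : ℕ) : ℤ :=
  if r = j then 2 else if r + 1 = j ∨ j + 1 = r then -1 else 0

/-- The pairing `⟨wt(A), α_j^∨⟩` where `wt(A) = m ω_i - Σ a_{p,q} α_{p,q}`,
and `α_{p,q} = α_p + ⋯ + α_q`. -/
def wtCoord (n i m : ℕ) (a : Mat) (j : ℕ) : ℤ :=
  (if j = i then (m : ℤ) else 0)
    - ∑ p ∈ Icc 1 i, ∑ q ∈ Icc i n, (a p q : ℤ) * ∑ r ∈ Icc p q, cartan r j

/-- The matrix `b^Λ` with `(p,q)`-entry `c ((p+q) mod (n+1))` on the index range. -/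
def bOf (n i : ℕ) (c : ℕ → ℕ) : Mat :=
  fun p q => if 1 ≤ p ∧ p ≤ i ∧ i ≤ q ∧ q ≤ n then c ((p + q) % (n + 1)) else 0


/-!
Along a monotone lattice path from `(1,i)` to `(i,n)` the quantity `p + q - i` runs through
`1, …, n` exactly once, so each path sum of `b_Λ` is `a_1 + ⋯ + a_n ≤ ℓ` (here `a_j` is `c j`). The entries of `b_Λ`
are constant along the diagonals `p + q = const`, which makes the functions `F` and `G` whose
maximizers define `ε_l` constant; hence `q_±` sit at the corner `i`, and `ε_l` reads off
the single entry `a_l`. For `l = 0` the first row and the last column together contain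
`a_1, …, a_n` once each, leaving `ℓ - (a_1 + ⋯ + a_n) = a_0`.
-/

lemma IsPath.fst_add_snd {n i : ℕ} {β : ℕ → ℕ × ℕ} (hβ : IsPath n i β) {s : ℕ}
    (hs₁ : 1 ≤ s) (hsn : s ≤ n) : (β s).1 + (β s).2 = i + s := by
  obtain ⟨hstart, -, hstep⟩ := hβ
  induction s, hs₁ using Nat.le_induction with
  | base => simp only [hstart]; omega
  | succ s hs ih =>
    rcases hstep s hs (by omega) with h | h <;> simp only [h] <;> omega

section Argmax

variable {F : ℕ → ℕ} {a b : ℕ}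

lemma eq_of_succ_eq_of_mem_Icc (hF : ∀ q, a ≤ q → q < b → F (q + 1) = F q) {q : ℕ}
    (hq : q ∈ Icc a b) : F q = F a := by
  obtain ⟨haq, hqb⟩ := mem_Icc.mp hq
  clear hq
  induction q, haq using Nat.le_induction with
  | base => rfl
  | succ q haq ih => rw [hF q haq (by omega), ih (by omega)]

lemma maximizers_Icc_of_succ_eq (hF : ∀ q, a ≤ q → q < b → F (q + 1) = F q) :
    maximizers (Icc a b) F = Icc a b :=
  filter_true_of_mem fun _ hq _ hq' =>
    (eq_of_succ_eq_of_mem_Icc hF hq').trans (eq_of_succ_eq_of_mem_Icc hF hq).symm |>.le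

lemma argmaxLow_Icc_of_succ_eq (hab : a ≤ b) (hF : ∀ q, a ≤ q → q < b → F (q + 1) = F q) :
    argmaxLow (Icc a b) F = a := by
  have hmin : (Icc a b).min = a := (min_le (left_mem_Icc.2 hab)).antisymm
    (Finset.le_min fun _ hx => WithTop.coe_le_coe.2 (mem_Icc.1 hx).1)
  rw [argmaxLow, maximizers_Icc_of_succ_eq hF, hmin]
  rfl

lemma argmaxHigh_Icc_of_succ_eq (hab : a ≤ b) (hF : ∀ q, a ≤ q → q < b → F (q + 1) = F q) :
    argmaxHigh (Icc a b) F = b := by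
  have hmax : (Icc a b).max = b := (Finset.max_le fun _ hx =>
    WithBot.coe_le_coe.2 (mem_Icc.1 hx).2).antisymm (le_max (right_mem_Icc.2 hab))
  rw [argmaxHigh, maximizers_Icc_of_succ_eq hF, hmax]
  rfl

end Argmax

lemma Fminus_succ_add (n i : ℕ) (a : Mat) (l : ℕ) {q : ℕ} (hiq : i ≤ q + 1) (hqn : q ≤ n) :
    Fminus n i a l (q + 1) + a (l + 1) q = Fminus n i a l q + a l (q + 1) := by
  simp only [Fminus, ← sum_Ioc_add_eq_sum_Icc hqn, Icc_add_one_left_eq_Ioc,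
    sum_Icc_succ_top hiq]
  ring

lemma Gplus_succ_add (i : ℕ) (a : Mat) (l : ℕ) {q : ℕ} (hqi : q ≤ i) :
    Gplus i a l (q + 1) + a q l = Gplus i a l q + a (q + 1) (l - 1) := by
  simp only [Gplus, ← sum_Ioc_add_eq_sum_Icc hqi, Icc_add_one_left_eq_Ioc,
    sum_Icc_succ_top (Nat.le_add_left 1 q)]
  ring

def bLambda (n i : ℕ) (c : ℕ → ℕ) : Mat :=
  fun p q => if 1 ≤ p ∧ p ≤ i ∧ i ≤ q ∧ q ≤ n then c (p + q - i) else 0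

section bLambda

variable {n i : ℕ} {c : ℕ → ℕ}

lemma bLambda_of_mem {p q : ℕ} (hp : 1 ≤ p) (hpi : p ≤ i) (hiq : i ≤ q) (hqn : q ≤ n) :
    bLambda n i c p q = c (p + q - i) :=
  if_pos ⟨hp, hpi, hiq, hqn⟩

lemma bLambda_succ_left {p q : ℕ} (hp : 1 ≤ p) (hpi : p < i) (hiq : i ≤ q) (hqn : q < n) :
    bLambda n i c (p + 1) q = bLambda n i c p (q + 1) := by
  rw [bLambda_of_mem (by omega) hpi (by omega) hqn.le,
    bLambda_of_mem hp hpi.le (by omega) hqn]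
  congr 1
  omega

lemma bLambda_path_le {β : ℕ → ℕ × ℕ} (hβ : IsPath n i β) {s : ℕ} (hs₁ : 1 ≤ s) (hsn : s ≤ n) :
    bLambda n i c (β s).1 (β s).2 ≤ c s := by
  unfold bLambda
  split_ifs
  · rw [show (β s).1 + (β s).2 - i = s by have := hβ.fst_add_snd hs₁ hsn; omega]
  · exact Nat.zero_le _

lemma memKR_bLambda {ℓ : ℕ} (hc : ∑ s ∈ Icc 1 n, c s ≤ ℓ) : MemKR n i ℓ (bLambda n i c) :=
  ⟨fun _ _ h => if_neg h, fun _ hβ =>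
    (sum_le_sum fun _ hs => bLambda_path_le hβ (mem_Icc.mp hs).1 (mem_Icc.mp hs).2).trans hc⟩

lemma qMinus_bLambda {l : ℕ} (hl : 1 ≤ l) (hli : l < i) (hin : i ≤ n) :
    qMinus n i (bLambda n i c) l = i :=
  argmaxLow_Icc_of_succ_eq hin fun q hiq hqn => add_right_cancel <| by
    rw [Fminus_succ_add n i _ l (by omega) hqn.le, bLambda_succ_left hl hli hiq hqn]

lemma qPlus_bLambda {l : ℕ} (hi : 1 ≤ i) (hil : i < l) (hln : l ≤ n) :
    qPlus i (bLambda n i c) l = i :=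
  argmaxHigh_Icc_of_succ_eq hi fun q hq hqi => add_right_cancel <| by
    rw [Gplus_succ_add i _ l hqi.le,
      bLambda_succ_left hq hqi (Nat.le_sub_one_of_lt hil) (by omega), Nat.sub_add_cancel (by omega)]

lemma sum_bLambda_row_one (hi : 1 ≤ i) (hin : i ≤ n) :
    ∑ q ∈ Icc i n, bLambda n i c 1 q = ∑ k ∈ range (n + 1 - i), c (1 + k) := by
  rw [← Ico_add_one_right_eq_Icc, sum_Ico_eq_sum_range]
  refine sum_congr rfl fun k hk => ?_
  rw [bLambda_of_mem le_rfl hi (by omega) (by rw [mem_range] at hk; omega)]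
  congr 1
  omega

lemma sum_bLambda_col_last (hin : i ≤ n) :
    ∑ p ∈ Icc 2 n, bLambda n i c p n = ∑ k ∈ range (i - 1), c (1 + (n + 1 - i) + k) := by
  have hzero : ∀ p ∈ Icc 2 n, p ∉ Icc 2 i → bLambda n i c p n = 0 := fun p hp hpi =>
    if_neg fun h => hpi (mem_Icc.2 ⟨(mem_Icc.1 hp).1, h.2.1⟩)
  rw [← sum_subset (Icc_subset_Icc_right hin) hzero, ← Ico_add_one_right_eq_Icc,
    sum_Ico_eq_sum_range]
  refine sum_congr rfl fun k hk => ?_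
  rw [mem_range] at hk
  rw [bLambda_of_mem (by omega) (by omega) hin le_rfl]
  congr 1
  omega

lemma sum_range_eq_add_sum_bLambda_hook (hi : 1 ≤ i) (hin : i ≤ n) :
    ∑ s ∈ range (n + 1), c s =
      c 0 + (∑ q ∈ Icc i n, bLambda n i c 1 q + ∑ p ∈ Icc 2 n, bLambda n i c p n) := by
  rw [sum_bLambda_row_one hi hin, sum_bLambda_col_last hin,
    show range (n + 1) = range (1 + (n + 1 - i) + (i - 1)) by congr 1; omega,
    sum_range_add, sum_range_add, sum_range_one, add_assoc]

lemma eps_bLambda_zero {ℓ : ℕ} (hi : 1 ≤ i) (hin : i ≤ n) (hc : ∑ s ∈ range (n + 1), c s = ℓ) :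
    eps n i ℓ (bLambda n i c) 0 = c 0 := by
  have := sum_range_eq_add_sum_bLambda_hook (c := c) hi hin
  rw [eps, if_pos rfl, ← Nat.cast_sum, ← Nat.cast_sum]
  omega

lemma eps_bLambda_of_lt {ℓ l : ℕ} (hl : 1 ≤ l) (hli : l < i) (hin : i ≤ n) :
    eps n i ℓ (bLambda n i c) l = c l := by
  rw [eps, if_neg (by omega), if_neg (by omega), if_neg (by omega), qMinus_bLambda hl hli hin,
    Icc_self, Icc_eq_empty (by omega), sum_singleton, sum_empty, sub_zero,
    bLambda_of_mem hl hli.le le_rfl hin, Nat.add_sub_cancel]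

lemma eps_bLambda_self {ℓ : ℕ} (hi : 1 ≤ i) (hin : i ≤ n) :
    eps n i ℓ (bLambda n i c) i = c i := by
  rw [eps, if_neg (by omega), if_pos rfl, bLambda_of_mem hi le_rfl le_rfl hin, Nat.add_sub_cancel]

lemma eps_bLambda_of_gt {ℓ l : ℕ} (hi : 1 ≤ i) (hil : i < l) (hln : l ≤ n) :
    eps n i ℓ (bLambda n i c) l = c l := by
  rw [eps, if_neg (by omega), if_neg (by omega), if_pos hil, qPlus_bLambda hi hil hln,
    Icc_self, Icc_eq_empty (by omega), sum_singleton, sum_empty, sub_zero,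
    bLambda_of_mem hi le_rfl hil.le hln, Nat.add_sub_cancel_left]

end bLambda

/-- for `Λ = (a₀,…,a_n)` of level `ℓ`, the matrix `b_Λ` with
`(p,q)`-entry `a_{p+q-i}` lies in `B^{i,ℓ}` and satisfies `ε_l(b_Λ) = a_l` for
all `l = 0,…,n`. -/
theorem stmt16 (n i ℓ : ℕ) (hi1 : 1 ≤ i) (hin : i ≤ n) (c : ℕ → ℕ)
    (hsum : ∑ j ∈ range (n + 1), c j = ℓ) :
    MemKR n i ℓ
      (fun p q => if 1 ≤ p ∧ p ≤ i ∧ i ≤ q ∧ q ≤ n then c (p + q - i) else 0) ∧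
    ∀ l, l ≤ n →
      eps n i ℓ
        (fun p q => if 1 ≤ p ∧ p ≤ i ∧ i ≤ q ∧ q ≤ n then c (p + q - i) else 0)
        l = c l := by
  change MemKR n i ℓ (bLambda n i c) ∧ ∀ l, l ≤ n → eps n i ℓ (bLambda n i c) l = c l
  have hIcc : ∑ s ∈ Icc 1 n, c s ≤ ℓ :=
    hsum ▸ sum_le_sum_of_subset fun s hs => by rw [mem_Icc] at hs; rw [mem_range]; omega
  refine ⟨memKR_bLambda hIcc, fun l hln => ?_⟩
  rcases Nat.eq_zero_or_pos l with rfl | hl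
  · exact eps_bLambda_zero hi1 hin hsum
  rcases lt_trichotomy l i with hli | rfl | hil
  · exact eps_bLambda_of_lt hl hli hin
  · exact eps_bLambda_self hl hin
  · exact eps_bLambda_of_gt hi1 hil hln
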